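/- arXiv:2406.06543 — 5 statements merged into one kernel-verified Lean document; each statement's English description precedes it below -/
import Mathlib

section
/- For the discrete-time IF neuron with subtractive reset and total integrated input U = S T, the total spike count satisfies N_IF T ≤ ⌊U/θ⌋. -/
/-- Membrane potential of the discrete-time IF neuron with subtractive reset:
`ifV θ x 0 = 0`, and at step `t+1` we let `W = V t + x (t+1)`; if `W ≥ θ`
the neuron spikes and `V (t+1) = W - θ`, otherwise `V (t+1) = W`. -/
noncomputable def ifV (θ : ℝ) (x : ℕ → ℝ) : ℕ → ℝ
  | 0 => 0
  | t + 1 =>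
      let W := ifV θ x t + x (t + 1)
      if θ ≤ W then W - θ else W

/-- Spike indicator `σ t` of the IF neuron at step `t ≥ 1`. -/
noncomputable def ifSpike (θ : ℝ) (x : ℕ → ℝ) (t : ℕ) : ℕ :=
  if θ ≤ ifV θ x (t - 1) + x t then 1 else 0

/-- Number of spikes `N_IF t = ∑_{τ ≤ t} σ τ` emitted up to step `t`. -/
noncomputable def nIF (θ : ℝ) (x : ℕ → ℝ) (t : ℕ) : ℕ :=
  ∑ τ ∈ Finset.Icc 1 t, ifSpike θ x τ

/-- Cumulative input `S t = ∑_{τ ≤ t} x τ`. -/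
noncomputable def Scum (x : ℕ → ℝ) (t : ℕ) : ℝ :=
  ∑ τ ∈ Finset.Icc 1 t, x τ

lemma ifV_invariant (θ : ℝ) (hθ : 0 < θ) (x : ℕ → ℝ) (T : ℕ)
    (hx : ∀ t, 1 ≤ t → t ≤ T → 0 ≤ x t) :
    ∀ t, t ≤ T → ifV θ x t = Scum x t - θ * nIF θ x t ∧ 0 ≤ ifV θ x t := by
  intro t
  induction t with
  | zero => intro _; simp [ifV, Scum, nIF]
  | succ n ih =>
    intro hle
    obtain ⟨heq, hpos⟩ := ih (Nat.le_of_succ_le hle)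
    have hxn := hx (n + 1) (Nat.succ_le_succ (Nat.zero_le n)) hle
    have hS : Scum x (n + 1) = Scum x n + x (n + 1) := by
      simp [Scum, Finset.sum_Icc_succ_top (Nat.succ_le_succ (Nat.zero_le n))]
    have hN : (nIF θ x (n + 1) : ℝ) = nIF θ x n + ifSpike θ x (n + 1) := by
      simp [nIF, Finset.sum_Icc_succ_top (Nat.succ_le_succ (Nat.zero_le n))]
    have hsp : ifSpike θ x (n + 1) = if θ ≤ ifV θ x n + x (n + 1) then 1 else 0 := by
      simp [ifSpike]
    have hV : ifV θ x (n + 1) = if θ ≤ ifV θ x n + x (n + 1) then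
        ifV θ x n + x (n + 1) - θ else ifV θ x n + x (n + 1) := rfl
    by_cases h : θ ≤ ifV θ x n + x (n + 1)
    · rw [hV, if_pos h, hS, hN, hsp, if_pos h, heq]
      refine ⟨by push_cast; ring, by linarith⟩
    · rw [hV, if_neg h, hS, hN, hsp, if_neg h, heq]
      refine ⟨by push_cast; ring, by linarith⟩

/-- With total integrated input `U = S T`, the total IF spike count
satisfies `N_IF T ≤ ⌊U/θ⌋`. -/
theorem if_count_le_floor (T : ℕ) (hT : 1 ≤ T) (θ : ℝ) (hθ : 0 < θ)
    (x : ℕ → ℝ) (hx : ∀ t, 1 ≤ t → t ≤ T → 0 ≤ x t) :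
    (nIF θ x T : ℤ) ≤ ⌊Scum x T / θ⌋ := by
  obtain ⟨heq, hpos⟩ := ifV_invariant θ hθ x T hx T le_rfl
  rw [Int.le_floor]
  rw [le_div_iff₀ hθ]
  push_cast
  nlinarith
end

section
/- For the discrete-time IF neuron with subtractive reset, the total integrated input decomposes as ⌊U/θ⌋ = N_IF T + ⌊V T / θ⌋, where V T is the residual membrane potential at the end of the window and U = S T. -/
/-- The total integrated input decomposes as
`⌊U/θ⌋ = N_IF T + ⌊V T / θ⌋`, with `U = S T` and `V T` the residual potential. -/
theorem if_floor_decomposition (T : ℕ) (hT : 1 ≤ T) (θ : ℝ) (hθ : 0 < θ)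
    (x : ℕ → ℝ) (hx : ∀ t, 1 ≤ t → t ≤ T → 0 ≤ x t) :
    ⌊Scum x T / θ⌋ = (nIF θ x T : ℤ) + ⌊ifV θ x T / θ⌋ := by
  have key : ∀ t : ℕ, Scum x t = θ * nIF θ x t + ifV θ x t := by
    intro t
    induction t with
    | zero => simp [Scum, nIF, ifV]
    | succ n ih =>
      have hS : Scum x (n + 1) = Scum x n + x (n + 1) := by
        simp [Scum, Finset.sum_Icc_succ_top (Nat.le_add_left 1 n)]
      have hN : (nIF θ x (n + 1) : ℝ) = nIF θ x n + ifSpike θ x (n + 1) := by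
        simp [nIF, Finset.sum_Icc_succ_top (Nat.le_add_left 1 n)]
      have hV : ifV θ x (n + 1) = if θ ≤ ifV θ x n + x (n + 1) then ifV θ x n + x (n + 1) - θ else ifV θ x n + x (n + 1) := rfl
      have hσ : ifSpike θ x (n + 1) = if θ ≤ ifV θ x n + x (n + 1) then 1 else 0 := by
        simp [ifSpike]
      rw [hS, hN, ih, hV, hσ]
      by_cases h : θ ≤ ifV θ x n + x (n + 1) <;> simp [h] <;> ring
  have hθ' : θ ≠ 0 := ne_of_gt hθ
  have : Scum x T / θ = (nIF θ x T : ℝ) + ifV θ x T / θ := by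
    rw [key T]; field_simp
  rw [this]
  rw [show ((nIF θ x T : ℝ)) = ((nIF θ x T : ℤ) : ℝ) by push_cast; ring]
  rw [add_comm (((nIF θ x T : ℤ) : ℝ)) _, Int.floor_add_intCast, add_comm]
end

section
/- (Exact-count criterion.) For the discrete-time IF neuron with subtractive reset, N_IF T = ⌊U/θ⌋ if and only if the residual membrane potential satisfies V T < θ, where U = S T is the total integrated input. -/
lemma ifV_eq (θ : ℝ) (x : ℕ → ℝ) (t : ℕ) :
    ifV θ x t = Scum x t - θ * nIF θ x t := by
  induction t with
  | zero => simp [ifV, Scum, nIF]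
  | succ t ih =>
    have hS : Scum x (t + 1) = Scum x t + x (t + 1) :=
      Finset.sum_Icc_succ_top (Nat.succ_le_succ (Nat.zero_le t)) x
    have hN : (nIF θ x (t + 1) : ℝ) = (nIF θ x t : ℝ) + (ifSpike θ x (t + 1) : ℝ) := by
      have := Finset.sum_Icc_succ_top (Nat.succ_le_succ (Nat.zero_le t)) (ifSpike θ x)
      rw [nIF, this]; push_cast [nIF]; ring
    rw [ifV]
    simp only [ifSpike, Nat.add_sub_cancel] at hN ⊢
    by_cases h : θ ≤ ifV θ x t + x (t + 1) <;> simp [h] at hN ⊢ <;>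
      rw [hS, hN, ih] <;> ring

lemma ifV_nonneg (T : ℕ) (θ : ℝ) (hθ : 0 < θ)
    (x : ℕ → ℝ) (hx : ∀ t, 1 ≤ t → t ≤ T → 0 ≤ x t) :
    ∀ t, t ≤ T → 0 ≤ ifV θ x t := by
  intro t
  induction t with
  | zero => intro _; simp [ifV]
  | succ t ih =>
    intro hle
    have hxt : 0 ≤ x (t + 1) := hx _ (Nat.succ_le_succ (Nat.zero_le t)) hle
    have h0 : 0 ≤ ifV θ x t := ih (Nat.le_of_succ_le hle)
    rw [ifV]
    by_cases h : θ ≤ ifV θ x t + x (t + 1) <;> simp [h] <;> linarith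

/-- Exact-count criterion: `N_IF T = ⌊U/θ⌋` iff the residual
membrane potential satisfies `V T < θ`, where `U = S T`. -/
theorem if_exact_count_iff (T : ℕ) (hT : 1 ≤ T) (θ : ℝ) (hθ : 0 < θ)
    (x : ℕ → ℝ) (hx : ∀ t, 1 ≤ t → t ≤ T → 0 ≤ x t) :
    (nIF θ x T : ℤ) = ⌊Scum x T / θ⌋ ↔ ifV θ x T < θ := by
  have hV := ifV_eq θ x T
  have h0 := ifV_nonneg T θ hθ x hx T le_rfl
  constructor
  · intro h
    have := Int.lt_floor_add_one (Scum x T / θ)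
    rw [← h] at this
    have : Scum x T / θ < (nIF θ x T : ℝ) + 1 := by exact_mod_cast this
    have := (div_lt_iff₀ hθ).mp this
    nlinarith
  · intro h
    symm
    rw [Int.floor_eq_iff]
    constructor
    · push_cast
      rw [le_div_iff₀ hθ]
      nlinarith
    · push_cast
      rw [div_lt_iff₀ hθ]
      nlinarith
end

section
/- (Bounded-input equality of IF and SSF.) For the discrete-time IF neuron with subtractive reset, if every per-timestep input is strictly below the threshold (x t < θ for all t = 1,…,T), then the membrane potential satisfies V t < θ for all 0 ≤ t ≤ T, and the IF spike count equals the SSF output count: N_IF T = ⌊U/θ⌋ = N_SSF, where U = S T and N_SSF = min(T, ⌊U/θ⌋). -/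
lemma if_inv (T : ℕ) (θ : ℝ) (hθ : 0 < θ)
    (x : ℕ → ℝ) (hx : ∀ t, 1 ≤ t → t ≤ T → 0 ≤ x t)
    (hxlt : ∀ t, 1 ≤ t → t ≤ T → x t < θ) :
    ∀ t ≤ T, 0 ≤ ifV θ x t ∧ ifV θ x t < θ ∧
      ifV θ x t = Scum x t - θ * nIF θ x t ∧ nIF θ x t ≤ t := by
  intro t
  induction t with
  | zero =>
    intro _
    refine ⟨le_refl _, hθ, by simp [ifV, Scum, nIF], le_refl _⟩
  | succ n ih =>
    intro hn
    obtain ⟨h0, h1, h2, h3⟩ := ih (le_of_lt (Nat.lt_of_succ_le hn))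
    have hx' := hx (n+1) (Nat.succ_le_succ (Nat.zero_le n)) hn
    have hxlt' := hxlt (n+1) (Nat.succ_le_succ (Nat.zero_le n)) hn
    have hS : Scum x (n+1) = Scum x n + x (n+1) := by
      simp [Scum, Finset.sum_Icc_succ_top (Nat.succ_le_succ (Nat.zero_le n))]
    have hN : nIF θ x (n+1) = nIF θ x n + ifSpike θ x (n+1) := by
      simp [nIF, Finset.sum_Icc_succ_top (Nat.succ_le_succ (Nat.zero_le n))]
    have hVd : ifV θ x (n+1) = if θ ≤ ifV θ x n + x (n+1) then
        ifV θ x n + x (n+1) - θ else ifV θ x n + x (n+1) := rfl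
    have hsd : ifSpike θ x (n+1) = if θ ≤ ifV θ x n + x (n+1) then 1 else 0 := by
      simp [ifSpike]
    by_cases h : θ ≤ ifV θ x n + x (n+1)
    · have hV' : ifV θ x (n+1) = ifV θ x n + x (n+1) - θ := by rw [hVd, if_pos h]
      have hs' : ifSpike θ x (n+1) = 1 := by rw [hsd, if_pos h]
      refine ⟨by rw [hV']; linarith, by rw [hV']; linarith, ?_, ?_⟩
      · rw [hV', hS, hN, hs']
        push_cast
        linarith
      · rw [hN, hs']
        omega
    · have hV' : ifV θ x (n+1) = ifV θ x n + x (n+1) := by rw [hVd, if_neg h]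
      have hs' : ifSpike θ x (n+1) = 0 := by rw [hsd, if_neg h]
      refine ⟨by rw [hV']; linarith, by rw [hV']; linarith [lt_of_not_ge h], ?_, ?_⟩
      · rw [hV', hS, hN, hs']
        push_cast
        linarith
      · rw [hN, hs']
        omega

/-- Bounded-input equality of IF and SSF: if `x t < θ` for all
`t = 1,…,T`, then `V t < θ` for all `0 ≤ t ≤ T`, and
`N_IF T = ⌊U/θ⌋ = N_SSF = min(T, ⌊U/θ⌋)` where `U = S T`. -/
theorem if_eq_ssf_of_bounded_input (T : ℕ) (hT : 1 ≤ T) (θ : ℝ) (hθ : 0 < θ)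
    (x : ℕ → ℝ) (hx : ∀ t, 1 ≤ t → t ≤ T → 0 ≤ x t)
    (hxlt : ∀ t, 1 ≤ t → t ≤ T → x t < θ) :
    (∀ t ≤ T, ifV θ x t < θ) ∧
      (nIF θ x T : ℤ) = ⌊Scum x T / θ⌋ ∧
      ⌊Scum x T / θ⌋ = min (T : ℤ) ⌊Scum x T / θ⌋ := by
  have H := if_inv T θ hθ x hx hxlt
  obtain ⟨h0, h1, h2, h3⟩ := H T le_rfl
  have hfloor : (nIF θ x T : ℤ) = ⌊Scum x T / θ⌋ := by
    symm
    apply Int.floor_eq_iff.mpr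
    constructor
    · push_cast
      rw [le_div_iff₀ hθ]
      nlinarith
    · push_cast
      rw [div_lt_iff₀ hθ]
      nlinarith
  refine ⟨fun t ht => (H t ht).2.1, hfloor, ?_⟩
  rw [← hfloor]
  symm
  apply min_eq_right
  exact_mod_cast h3
end

section
/- (IF is not timing-invariant.) There exist a window length T ∈ ℕ with T ≥ 1, a threshold θ > 0, and two nonnegative input sequences x, x' : {1,…,T} → ℝ with equal total sums ∑_t x t = ∑_t x' t, such that the discrete-time IF neuron with subtractive reset emits different total spike counts on x and on x' (for example T = 2, θ = 1, x = (1,1) yields 2 spikes while x' = (0,2) yields 1 spike). -/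
/-- IF is not timing-invariant: there exist a window `T ≥ 1`, a
threshold `θ > 0`, and two nonnegative input sequences with equal total sums on
which the IF neuron emits different total spike counts. -/
theorem if_not_timing_invariant :
    ∃ (T : ℕ) (θ : ℝ) (x x' : ℕ → ℝ),
      1 ≤ T ∧ 0 < θ ∧
      (∀ t, 1 ≤ t → t ≤ T → 0 ≤ x t) ∧
      (∀ t, 1 ≤ t → t ≤ T → 0 ≤ x' t) ∧
      Scum x T = Scum x' T ∧
      nIF θ x T ≠ nIF θ x' T := by
  refine ⟨2, 1, fun _ => 1, fun t => if t = 2 then 2 else 0, by norm_num, by norm_num,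
    fun t _ _ => by norm_num, fun t _ _ => by positivity, ?_, ?_⟩
  · show (∑ τ ∈ Finset.Icc 1 2, (1:ℝ)) = _
    rw [Scum, show Finset.Icc 1 2 = {1, 2} from rfl]
    norm_num
  · rw [nIF, nIF, show Finset.Icc 1 2 = {1, 2} from rfl]
    rw [Finset.sum_pair (by norm_num), Finset.sum_pair (by norm_num)]
    norm_num [ifSpike, ifV]
end
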